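/- Fix ρ, λ ∈ [0,1] and R2 ∈ ℝ. Let (P,P') be a pair of joint pmfs on 𝒳1×𝒳2×𝒴1 such that P_{X̂2,Ŷ1} = P_{X̂2',Ŷ1'} and I(X̂2;Ŷ1) = R2, where I(X̂2;Ŷ1) is computed under P. Then f1(ρ,λ,P,P') = f2(ρ,λ,P,P'). -/

import Mathlib

open Finset

section InfoDefs

variable {Ω : Type*} [Fintype Ω]

/-- A probability mass function on a finite type. -/
def IsPMF {α : Type*} [Fintype α] (p : α → ℝ) : Prop :=
  (∀ a, 0 ≤ p a) ∧ ∑ a, p a = 1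

/-- Pushforward of `P` along `f` (the pmf of the random variable `f`). -/
noncomputable def pushf {α : Type*} [Fintype α] [DecidableEq α]
    (P : Ω → ℝ) (f : Ω → α) (a : α) : ℝ :=
  ∑ ω, if f ω = a then P ω else 0

/-- Entropy of the random variable `f` under `P`. -/
noncomputable def entH {α : Type*} [Fintype α] [DecidableEq α]
    (P : Ω → ℝ) (f : Ω → α) : ℝ :=
  -∑ a, pushf P f a * Real.log (pushf P f a)

/-- Conditional entropy `H(g | f)` under `P`. -/
noncomputable def condEnt {α β : Type*} [Fintype α] [DecidableEq α] [Fintype β] [DecidableEq β]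
    (P : Ω → ℝ) (f : Ω → α) (g : Ω → β) : ℝ :=
  -∑ a, ∑ b, pushf P (fun ω => (f ω, g ω)) (a, b) *
      Real.log (pushf P (fun ω => (f ω, g ω)) (a, b) / pushf P f a)

/-- Mutual information `I(f;g)` under `P`. -/
noncomputable def mutI {α β : Type*} [Fintype α] [DecidableEq α] [Fintype β] [DecidableEq β]
    (P : Ω → ℝ) (f : Ω → α) (g : Ω → β) : ℝ :=
  ∑ a, ∑ b, pushf P (fun ω => (f ω, g ω)) (a, b) *
      Real.log (pushf P (fun ω => (f ω, g ω)) (a, b) / (pushf P f a * pushf P g b))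

/-- Conditional mutual information `I(f;g|h)` under `P`. -/
noncomputable def condMutI {α β γ : Type*} [Fintype α] [DecidableEq α] [Fintype β]
    [DecidableEq β] [Fintype γ] [DecidableEq γ]
    (P : Ω → ℝ) (f : Ω → α) (g : Ω → β) (h : Ω → γ) : ℝ :=
  ∑ a, ∑ b, ∑ c, pushf P (fun ω => (f ω, g ω, h ω)) (a, b, c) *
      Real.log (pushf P (fun ω => (f ω, g ω, h ω)) (a, b, c) * pushf P h c /
        (pushf P (fun ω => (f ω, h ω)) (a, c) * pushf P (fun ω => (g ω, h ω)) (b, c)))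

end InfoDefs
section IFC

variable {X1 X2 Y1 : Type*} [Fintype X1] [DecidableEq X1] [Fintype X2] [DecidableEq X2]
  [Fintype Y1] [DecidableEq Y1]

/-- The function `g(ρ,λ,P,P')`. -/
noncomputable def gFun (q1 : X1 → X2 → Y1 → ℝ) (ρ lam : ℝ)
    (P P' : X1 × X2 × Y1 → ℝ) : ℝ :=
  -(1 - ρ * lam) * (∑ z, P z * Real.log (q1 z.1 z.2.1 z.2.2))
    - ρ * lam * (∑ z, P' z * Real.log (q1 z.1 z.2.1 z.2.2))

/-- The function `f1(ρ,λ,P,P')`. -/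
noncomputable def f1Fun (q1 : X1 → X2 → Y1 → ℝ) (R2 ρ lam : ℝ)
    (P P' : X1 × X2 × Y1 → ℝ) : ℝ :=
  gFun q1 ρ lam P P'
    - condEnt P (fun z => z.1) (fun z => z.2.2)
    + ρ * mutI P' (fun z => z.1) (fun z => z.2.2)
    + max (mutI P (fun z => z.2.1) (fun z => (z.1, z.2.2)) - R2)
        ((1 - ρ * lam) * (mutI P (fun z => z.2.1) (fun z => (z.1, z.2.2)) - R2))
    + max (max ((1 - ρ) * mutI P' (fun z => z.2.1) (fun z => z.2.2)
            + ρ * mutI P' (fun z => z.2.1) (fun z => (z.1, z.2.2)) - R2)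
          (ρ * (mutI P' (fun z => z.2.1) (fun z => (z.1, z.2.2)) - R2)))
        (ρ * lam * (mutI P' (fun z => z.2.1) (fun z => (z.1, z.2.2)) - R2))

/-- The function `f2(ρ,λ,P,P')`. -/
noncomputable def f2Fun (q1 : X1 → X2 → Y1 → ℝ) (R2 ρ lam : ℝ)
    (P P' : X1 × X2 × Y1 → ℝ) : ℝ :=
  gFun q1 ρ lam P P'
    - condEnt P (fun z => z.1) (fun z => z.2.2)
    + ρ * mutI P' (fun z => z.1) (fun z => (z.2.1, z.2.2))
    + mutI P (fun z => z.2.1) (fun z => (z.1, z.2.2)) - R2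

/-- The constraint set `S1(Q1,Q2)`. -/
def S1set (Y1 : Type*) [Fintype Y1] [DecidableEq Y1] (Q1 : X1 → ℝ) (Q2 : X2 → ℝ) :
    Set ((X1 × X2 × Y1 → ℝ) × (X1 × X2 × Y1 → ℝ)) :=
  {PP | IsPMF PP.1 ∧ IsPMF PP.2 ∧
    pushf PP.1 (fun z => z.2.2) = pushf PP.2 (fun z => z.2.2) ∧
    pushf PP.1 (fun z => z.1) = Q1 ∧ pushf PP.2 (fun z => z.1) = Q1 ∧
    pushf PP.1 (fun z => z.2.1) = Q2 ∧ pushf PP.2 (fun z => z.2.1) = Q2}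

/-- The constraint set `S2(Q1,Q2,R2)`. -/
def S2set (Y1 : Type*) [Fintype Y1] [DecidableEq Y1] (Q1 : X1 → ℝ) (Q2 : X2 → ℝ) (R2 : ℝ) :
    Set ((X1 × X2 × Y1 → ℝ) × (X1 × X2 × Y1 → ℝ)) :=
  {PP | IsPMF PP.1 ∧ IsPMF PP.2 ∧
    pushf PP.1 (fun z => z.1) = Q1 ∧ pushf PP.2 (fun z => z.1) = Q1 ∧
    pushf PP.1 (fun z => z.2.1) = Q2 ∧ pushf PP.2 (fun z => z.2.1) = Q2 ∧
    R2 ≤ mutI PP.1 (fun z => z.2.1) (fun z => z.2.2) ∧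
    pushf PP.1 (fun z => (z.2.1, z.2.2)) = pushf PP.2 (fun z => (z.2.1, z.2.2))}

/-- The error exponent `E_{R,1}(R1,R2,Q1,Q2,ρ,λ)` (with `+∞` for infima over empty sets). -/
noncomputable def ER1 (q1 : X1 → X2 → Y1 → ℝ) (R1 R2 : ℝ) (Q1 : X1 → ℝ) (Q2 : X2 → ℝ)
    (ρ lam : ℝ) : EReal :=
  ((R2 - ρ * R1 : ℝ) : EReal) +
    min (⨅ PP : S1set Y1 Q1 Q2, ((f1Fun q1 R2 ρ lam PP.1.1 PP.1.2 : ℝ) : EReal))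
        (⨅ PP : S2set Y1 Q1 Q2 R2, ((f2Fun q1 R2 ρ lam PP.1.1 PP.1.2 : ℝ) : EReal))

end IFC

/-!
Once `I(X̂2;Ŷ1) = R2`, which carries over to `P'` because `(X̂2',Ŷ1')` has the same law, both
maxima in `f1` are attained at their first branch: by the chain rule
`I(X̂2;(X̂1,Ŷ1)) - R2 = I(X̂2;X̂1|Ŷ1) ≥ 0`, the nonnegativity being Gibbs' inequality. What is
left of `f1 - f2` is `ρ` times `I(X̂1';Ŷ1') + I(X̂2';(X̂1',Ŷ1')) - I(X̂2';Ŷ1') - I(X̂1';(X̂2',Ŷ1'))`,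
which vanishes since by the chain rule both pairs of terms equal
`I(X̂1';Ŷ1') + I(X̂2';Ŷ1') + I(X̂1';X̂2'|Ŷ1')`.
-/

open Real

theorem sum_mul_log_div_nonneg {ι : Type*} [Fintype ι] {p q : ι → ℝ} (hp : ∀ i, 0 ≤ p i)
    (hq : ∀ i, 0 ≤ q i) (hpq : ∀ i, 0 < p i → 0 < q i) (hsum : ∑ i, q i ≤ ∑ i, p i) :
    0 ≤ ∑ i, p i * log (p i / q i) := by
  have hterm : ∀ i, p i - q i ≤ p i * log (p i / q i) := by
    intro i
    rcases (hp i).eq_or_lt with h0 | hpos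
    · simp [← h0, hq i]
    · have hqpos := hpq i hpos
      calc p i - q i = p i * (1 - (p i / q i)⁻¹) := by field_simp
        _ ≤ p i * log (p i / q i) :=
          mul_le_mul_of_nonneg_left (one_sub_inv_le_log_of_pos (by positivity)) hpos.le
  calc (0 : ℝ) ≤ ∑ i, (p i - q i) := by rw [sum_sub_distrib]; linarith
    _ ≤ _ := sum_le_sum fun i _ => hterm i

section Pushforward

variable {Ω : Type*} [Fintype Ω] {α β γ : Type*} [Fintype α] [DecidableEq α]
  [Fintype β] [DecidableEq β] [Fintype γ] [DecidableEq γ] {P : Ω → ℝ}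

theorem pushf_le_pushf_comp (hP : ∀ ω, 0 ≤ P ω) (f : Ω → α) (φ : α → β) (a : α) :
    pushf P f a ≤ pushf P (fun ω => φ (f ω)) (φ a) :=
  sum_le_sum fun ω _ => by
    by_cases h : f ω = a
    · simp [h]
    · by_cases h' : φ (f ω) = φ a <;> simp [h, h', hP ω]

theorem pushf_nonneg (hP : ∀ ω, 0 ≤ P ω) (f : Ω → α) (a : α) : 0 ≤ pushf P f a :=
  sum_nonneg fun ω _ => by split <;> simp [hP ω]

theorem le_pushf_apply (hP : ∀ ω, 0 ≤ P ω) (f : Ω → α) (ω : Ω) : P ω ≤ pushf P f (f ω) :=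
  single_le_sum (f := fun ω' => if f ω' = f ω then P ω' else 0)
    (fun ω' _ => by split <;> simp [hP ω']) (mem_univ ω) |>.trans_eq' (by simp)

theorem pushf_apply_pos (hP : ∀ ω, 0 ≤ P ω) (f : Ω → α) {ω : Ω} (hω : 0 < P ω) :
    0 < pushf P f (f ω) :=
  hω.trans_le (le_pushf_apply hP f ω)

theorem sum_pushf_mul (P : Ω → ℝ) (f : Ω → α) (F : α → ℝ) :
    ∑ a, pushf P f a * F a = ∑ ω, P ω * F (f ω) := by
  simp only [pushf, sum_mul, ite_mul, zero_mul]
  rw [sum_comm]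
  simp

theorem sum_pushf (P : Ω → ℝ) (f : Ω → α) : ∑ a, pushf P f a = ∑ ω, P ω := by
  simpa using sum_pushf_mul P f fun _ => 1

theorem sum_pushf_pair_left (P : Ω → ℝ) (f : Ω → α) (g : Ω → β) (b : β) :
    ∑ a, pushf P (fun ω => (f ω, g ω)) (a, b) = pushf P g b := by
  simp only [pushf]
  rw [sum_comm]
  simp [Prod.ext_iff, ite_and]

theorem sum_pushf_pair_right (P : Ω → ℝ) (f : Ω → α) (g : Ω → β) (a : α) :
    ∑ b, pushf P (fun ω => (f ω, g ω)) (a, b) = pushf P f a := by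
  simp only [pushf]
  rw [sum_comm]
  refine sum_congr rfl fun ω _ => ?_
  by_cases h : f ω = a <;> simp [Prod.ext_iff, h]

theorem pushf_swap_apply (P : Ω → ℝ) (f : Ω → α) (g : Ω → β) (h : Ω → γ) (a : α) (b : β)
    (c : γ) :
    pushf P (fun ω => (g ω, f ω, h ω)) (b, a, c) =
      pushf P (fun ω => (f ω, g ω, h ω)) (a, b, c) := by
  simp only [pushf, Prod.mk.injEq, and_left_comm]

end Pushforward

section Information

variable {Ω : Type*} [Fintype Ω] {α β γ : Type*} [Fintype α] [DecidableEq α]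
  [Fintype β] [DecidableEq β] [Fintype γ] [DecidableEq γ] {P Q : Ω → ℝ}

theorem mutI_eq_sum (P : Ω → ℝ) (f : Ω → α) (g : Ω → β) :
    mutI P f g = ∑ ω, P ω * log (pushf P (fun ω => (f ω, g ω)) (f ω, g ω) /
      (pushf P f (f ω) * pushf P g (g ω))) := by
  rw [mutI, ← sum_pushf_mul P (fun ω => (f ω, g ω))
    fun x => log (pushf P (fun ω => (f ω, g ω)) x / (pushf P f x.1 * pushf P g x.2)),
    Fintype.sum_prod_type]

theorem condMutI_eq_sum (P : Ω → ℝ) (f : Ω → α) (g : Ω → β) (h : Ω → γ) :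
    condMutI P f g h = ∑ ω, P ω * log (pushf P (fun ω => (f ω, g ω, h ω)) (f ω, g ω, h ω) *
      pushf P h (h ω) / (pushf P (fun ω => (f ω, h ω)) (f ω, h ω) *
        pushf P (fun ω => (g ω, h ω)) (g ω, h ω))) := by
  rw [condMutI, ← sum_pushf_mul P (fun ω => (f ω, g ω, h ω)) fun x =>
    log (pushf P (fun ω => (f ω, g ω, h ω)) x * pushf P h x.2.2 /
      (pushf P (fun ω => (f ω, h ω)) (x.1, x.2.2) *
        pushf P (fun ω => (g ω, h ω)) (x.2.1, x.2.2)))]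
  simp only [Fintype.sum_prod_type]

theorem mutI_congr_of_pushf_pair_eq (f : Ω → α) (g : Ω → β)
    (hPQ : pushf P (fun ω => (f ω, g ω)) = pushf Q (fun ω => (f ω, g ω))) :
    mutI P f g = mutI Q f g := by
  have hf : pushf P f = pushf Q f := funext fun a => by
    rw [← sum_pushf_pair_right P f g, ← sum_pushf_pair_right Q f g, hPQ]
  have hg : pushf P g = pushf Q g := funext fun b => by
    rw [← sum_pushf_pair_left P f g, ← sum_pushf_pair_left Q f g, hPQ]
  rw [mutI, mutI, hPQ, hf, hg]

theorem condMutI_comm (P : Ω → ℝ) (f : Ω → α) (g : Ω → β) (h : Ω → γ) :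
    condMutI P f g h = condMutI P g f h := by
  rw [condMutI, condMutI, sum_comm]
  refine sum_congr rfl fun b _ => sum_congr rfl fun a _ => sum_congr rfl fun c _ => ?_
  rw [pushf_swap_apply, mul_comm (pushf P (fun ω => (g ω, h ω)) (b, c))]

theorem sum_pushf_mul_pushf_div (P : Ω → ℝ) (f : Ω → α) (g : Ω → β) (h : Ω → γ) :
    ∑ x : α × β × γ, pushf P (fun ω => (f ω, h ω)) (x.1, x.2.2) *
      pushf P (fun ω => (g ω, h ω)) (x.2.1, x.2.2) / pushf P h x.2.2 = ∑ ω, P ω := by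
  calc _ = ∑ c, (∑ a, pushf P (fun ω => (f ω, h ω)) (a, c)) *
        (∑ b, pushf P (fun ω => (g ω, h ω)) (b, c)) / pushf P h c := by
        simp only [Fintype.sum_prod_type, sum_mul_sum, sum_div]
        conv_rhs => rw [sum_comm]
        exact sum_congr rfl fun _ _ => sum_comm
    _ = ∑ c, pushf P h c := by simp only [sum_pushf_pair_left, mul_self_div_self]
    _ = ∑ ω, P ω := sum_pushf P h

theorem condMutI_nonneg (hP : ∀ ω, 0 ≤ P ω) (f : Ω → α) (g : Ω → β) (h : Ω → γ) :
    0 ≤ condMutI P f g h := by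
  have key := sum_mul_log_div_nonneg (p := pushf P (fun ω => (f ω, g ω, h ω)))
    (q := fun x => pushf P (fun ω => (f ω, h ω)) (x.1, x.2.2) *
      pushf P (fun ω => (g ω, h ω)) (x.2.1, x.2.2) / pushf P h x.2.2)
    (pushf_nonneg hP _) (fun x => div_nonneg (mul_nonneg (pushf_nonneg hP _ _)
      (pushf_nonneg hP _ _)) (pushf_nonneg hP _ _)) (fun x hx => ?_)
    (by rw [sum_pushf_mul_pushf_div, sum_pushf])
  · simpa only [condMutI, Fintype.sum_prod_type, div_div_eq_mul_div] using key
  have := hx.trans_le (pushf_le_pushf_comp hP _ (fun x : α × β × γ => (x.1, x.2.2)) x)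
  have := hx.trans_le (pushf_le_pushf_comp hP _ (fun x : α × β × γ => (x.2.1, x.2.2)) x)
  have := hx.trans_le (pushf_le_pushf_comp hP _ (fun x : α × β × γ => x.2.2) x)
  positivity

theorem mutI_pair_eq_mutI_add_condMutI (hP : ∀ ω, 0 ≤ P ω) (f : Ω → α) (g : Ω → β)
    (h : Ω → γ) :
    mutI P f (fun ω => (h ω, g ω)) = mutI P f g + condMutI P f h g := by
  rw [mutI_eq_sum, mutI_eq_sum, condMutI_eq_sum, ← sum_add_distrib]
  refine sum_congr rfl fun ω _ => ?_
  rcases (hP ω).eq_or_lt with h0 | hpos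
  · simp [← h0]
  have := pushf_apply_pos hP f hpos
  have := pushf_apply_pos hP g hpos
  have := pushf_apply_pos hP (fun ω => (f ω, g ω)) hpos
  have := pushf_apply_pos hP (fun ω => (h ω, g ω)) hpos
  have := pushf_apply_pos hP (fun ω => (f ω, h ω, g ω)) hpos
  rw [← mul_add, ← log_mul (by positivity) (by positivity)]
  congr 2
  field_simp

theorem mutI_le_mutI_pair (hP : ∀ ω, 0 ≤ P ω) (f : Ω → α) (g : Ω → β) (h : Ω → γ) :
    mutI P f g ≤ mutI P f (fun ω => (h ω, g ω)) := by
  rw [mutI_pair_eq_mutI_add_condMutI hP]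
  linarith [condMutI_nonneg hP f h g]

theorem mutI_add_mutI_pair_comm (hP : ∀ ω, 0 ≤ P ω) (f : Ω → α) (g : Ω → β) (h : Ω → γ) :
    mutI P f h + mutI P g (fun ω => (f ω, h ω)) =
      mutI P g h + mutI P f (fun ω => (g ω, h ω)) := by
  rw [mutI_pair_eq_mutI_add_condMutI hP, mutI_pair_eq_mutI_add_condMutI hP, condMutI_comm]
  ring

end Information

theorem stmt4_general {X1 X2 Y1 : Type*} [Fintype X1] [DecidableEq X1] [Fintype X2] [DecidableEq X2]
    [Fintype Y1] [DecidableEq Y1]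
    (q1 : X1 → X2 → Y1 → ℝ)
    (ρ lam : ℝ) (hρ0 : 0 ≤ ρ) (hlam0 : 0 ≤ lam) (hlam1 : lam ≤ 1)
    (R2 : ℝ) (P P' : X1 × X2 × Y1 → ℝ) (hP : IsPMF P) (hP' : IsPMF P')
    (hmarg : pushf P (fun z => (z.2.1, z.2.2)) = pushf P' (fun z => (z.2.1, z.2.2)))
    (hR2 : mutI P (fun z => z.2.1) (fun z => z.2.2) = R2) :
    f1Fun q1 R2 ρ lam P P' = f2Fun q1 R2 ρ lam P P' := by
  set J := mutI P (fun z => z.2.1) (fun z => (z.1, z.2.2))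
  set J' := mutI P' (fun z => z.2.1) (fun z => (z.1, z.2.2))
  have hR2' : mutI P' (fun z => z.2.1) (fun z => z.2.2) = R2 := by
    rw [← mutI_congr_of_pushf_pair_eq _ _ hmarg, hR2]
  have hgap : R2 ≤ J := hR2 ▸ mutI_le_mutI_pair hP.1 _ _ _
  have hgap' : R2 ≤ J' := hR2' ▸ mutI_le_mutI_pair hP'.1 _ _ _
  have hbranch : (1 - ρ) * R2 + ρ * J' - R2 = ρ * (J' - R2) := by ring
  rw [f1Fun, f2Fun, hR2', hbranch, max_self,
    max_eq_left (by nlinarith [mul_nonneg hρ0 hlam0]),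
    max_eq_left (by nlinarith [mul_nonneg hρ0 (sub_nonneg.2 hlam1)])]
  linear_combination ρ * mutI_add_mutI_pair_comm hP'.1 (fun z => z.1) (fun z => z.2.1)
    (fun z => z.2.2) + ρ * hR2'

/-- if `P_{X̂2,Ŷ1} = P_{X̂2',Ŷ1'}` and `I(X̂2;Ŷ1) = R2` (computed under `P`),
then `f1(ρ,λ,P,P') = f2(ρ,λ,P,P')`. -/
theorem stmt4 {X1 X2 Y1 : Type*} [Fintype X1] [DecidableEq X1] [Fintype X2] [DecidableEq X2]
    [Fintype Y1] [DecidableEq Y1]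
    (q1 : X1 → X2 → Y1 → ℝ) (hq_pos : ∀ x1 x2 y, 0 < q1 x1 x2 y)
    (hq_sum : ∀ x1 x2, ∑ y, q1 x1 x2 y = 1)
    (ρ lam : ℝ) (hρ0 : 0 ≤ ρ) (hρ1 : ρ ≤ 1) (hlam0 : 0 ≤ lam) (hlam1 : lam ≤ 1)
    (R2 : ℝ) (P P' : X1 × X2 × Y1 → ℝ) (hP : IsPMF P) (hP' : IsPMF P')
    (hmarg : pushf P (fun z => (z.2.1, z.2.2)) = pushf P' (fun z => (z.2.1, z.2.2)))
    (hR2 : mutI P (fun z => z.2.1) (fun z => z.2.2) = R2) :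
    f1Fun q1 R2 ρ lam P P' = f2Fun q1 R2 ρ lam P P' :=
  stmt4_general q1 ρ lam hρ0 hlam0 hlam1 R2 P P' hP hP' hmarg hR2
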